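/- Let $n \ge 1$, $1 \le p < q < \infty$ and $\varepsilon \in (0,1)$. Define $f(x) = \chi_{(0,1)}(|x|) |x|^{-n/q}$, $g(x) = \chi_{(0,\varepsilon)}(|x|) f(x)$, and $h(x) = f(x) - g(x)$ for $x \in \mathbb{R}^n \setminus \{0\}$. Then $\|h\|_{m^p_q} \ge \|f\|_{m^p_q} \, (1 - \varepsilon^{n(1 - p/q)})^{1/p}$. -/

import Mathlib

open MeasureTheory

/-- The set of candidate values whose supremum defines the small Morrey norm of `f`
on `ℝⁿ`: `|B(a,r)|^(1/q-1/p) (∫_{B(a,r)} |f|^p)^(1/p)` over all centers `a` and radii `r ∈ (0,1)`. -/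
def smallMorreySet (n : ℕ) (p q : ℝ) (f : EuclideanSpace ℝ (Fin n) → ℝ) : Set ℝ :=
  {v : ℝ | ∃ (a : EuclideanSpace ℝ (Fin n)) (r : ℝ), 0 < r ∧ r < 1 ∧
    v = (volume (Metric.ball a r)).toReal ^ (1 / q - 1 / p) *
        (∫ x in Metric.ball a r, |f x| ^ p) ^ (1 / p)}

/-- The small Morrey norm `‖f‖_{m^p_q}`. -/
noncomputable def smallMorreyNorm (n : ℕ) (p q : ℝ) (f : EuclideanSpace ℝ (Fin n) → ℝ) : ℝ :=
  sSup (smallMorreySet n p q f)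

/-- `f` belongs to the small Morrey space `m^p_q(ℝⁿ)`: it is measurable and its small Morrey
norm is finite (i.e. the defining supremum is over a bounded set). -/
def MemSmallMorrey (n : ℕ) (p q : ℝ) (f : EuclideanSpace ℝ (Fin n) → ℝ) : Prop :=
  Measurable f ∧ BddAbove (smallMorreySet n p q f)

open MeasureTheory Metric Set Filter
open scoped ENNReal NNReal Topology

namespace SmallMorreyAux

noncomputable section

variable {n : ℕ}

/-- `‖x‖^σ` cut off to the punctured unit ball. -/
def Fc (n : ℕ) (σ : ℝ) (x : EuclideanSpace ℝ (Fin n)) : ℝ :=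
  if 0 < ‖x‖ ∧ ‖x‖ < 1 then ‖x‖ ^ σ else 0

/-- `‖x‖^σ` cut off to the annulus `ε ≤ ‖x‖ < 1`. -/
def Hc (n : ℕ) (σ ε : ℝ) (x : EuclideanSpace ℝ (Fin n)) : ℝ :=
  if ε ≤ ‖x‖ ∧ ‖x‖ < 1 then ‖x‖ ^ σ else 0

lemma measurable_Fc (σ : ℝ) : Measurable (Fc n σ) := by
  apply Measurable.ite _ (measurable_norm.pow_const σ) measurable_const
  exact (measurableSet_lt measurable_const measurable_norm).inter
    (measurableSet_lt measurable_norm measurable_const)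

lemma measurable_Hc (σ ε : ℝ) : Measurable (Hc n σ ε) := by
  apply Measurable.ite _ (measurable_norm.pow_const σ) measurable_const
  exact (measurableSet_le measurable_const measurable_norm).inter
    (measurableSet_lt measurable_norm measurable_const)

lemma Fc_nonneg (σ : ℝ) (x : EuclideanSpace ℝ (Fin n)) : 0 ≤ Fc n σ x := by
  unfold Fc; split_ifs
  · exact Real.rpow_nonneg (norm_nonneg x) σ
  · exact le_rfl

lemma Hc_nonneg (σ ε : ℝ) (x : EuclideanSpace ℝ (Fin n)) : 0 ≤ Hc n σ ε x := by
  unfold Hc; split_ifs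
  · exact Real.rpow_nonneg (norm_nonneg x) σ
  · exact le_rfl

lemma Hc_le_Fc {σ ε : ℝ} (hε : 0 < ε) (x : EuclideanSpace ℝ (Fin n)) :
    Hc n σ ε x ≤ Fc n σ x := by
  unfold Hc Fc
  split_ifs with h1 h2 h2
  · exact le_rfl
  · exact absurd ⟨hε.trans_le h1.1, h1.2⟩ h2
  · exact Real.rpow_nonneg (norm_nonneg x) σ
  · exact le_rfl

lemma superlevel_Fc {σ : ℝ} (hσ0 : σ < 0) {t : ℝ} (ht : 0 < t) :
    {x : EuclideanSpace ℝ (Fin n) | t < Fc n σ x}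
      = ball (0 : EuclideanSpace ℝ (Fin n)) (min 1 (t ^ σ⁻¹)) \ {0} := by
  ext x
  simp only [mem_setOf_eq, mem_diff, mem_ball_zero_iff, mem_singleton_iff, Fc, lt_min_iff]
  constructor
  · intro hx
    split_ifs at hx with hc
    · refine ⟨⟨hc.2, ?_⟩, norm_pos_iff.mp hc.1⟩
      exact (Real.lt_rpow_inv_iff_of_neg hc.1 ht hσ0).mpr hx
    · linarith
  · rintro ⟨⟨h1, h2⟩, h0⟩
    have hx : 0 < ‖x‖ := norm_pos_iff.mpr h0
    rw [if_pos ⟨hx, h1⟩]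
    exact (Real.lt_rpow_inv_iff_of_neg hx ht hσ0).mp h2


/-- The constant in `∫_{B(0,r)} ‖x‖^σ = r^(n+σ) * Cc`. -/
def Cc (n : ℕ) (σ : ℝ) : ℝ≥0∞ :=
  ENNReal.ofReal (1 - ((n : ℝ) * σ⁻¹ + 1)⁻¹) *
    volume (ball (0 : EuclideanSpace ℝ (Fin n)) 1)

lemma exp_lt_neg_one {σ : ℝ} (hσn : -(n : ℝ) < σ) (hσ0 : σ < 0) (hn : 1 ≤ n) :
    (n : ℝ) * σ⁻¹ < -1 := by
  rw [← div_eq_mul_inv, div_lt_iff_of_neg hσ0]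
  linarith

lemma Cc_pos (hn : 1 ≤ n) {σ : ℝ} (hσn : -(n : ℝ) < σ) (hσ0 : σ < 0) : 0 < Cc n σ := by
  have h1 : (n : ℝ) * σ⁻¹ + 1 < 0 := by linarith [exp_lt_neg_one hσn hσ0 hn]
  have h2 : ((n : ℝ) * σ⁻¹ + 1)⁻¹ < 0 := inv_lt_zero.mpr h1
  apply ENNReal.mul_pos
  · exact (ENNReal.ofReal_pos.mpr (by linarith)).ne'
  · exact (measure_ball_pos volume _ one_pos).ne'

lemma Cc_ne_top {σ : ℝ} : Cc n σ ≠ ⊤ :=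
  ENNReal.mul_ne_top ENNReal.ofReal_ne_top measure_ball_lt_top.ne


lemma Phi_eq (hn : 1 ≤ n) {σ : ℝ} (hσn : -(n : ℝ) < σ) (hσ0 : σ < 0)
    {r : ℝ} (hr : 0 < r) (hr1 : r ≤ 1) :
    ∫⁻ t in Ioi (0 : ℝ),
        volume (ball (0 : EuclideanSpace ℝ (Fin n)) (min (min 1 (t ^ σ⁻¹)) r))
      = ENNReal.ofReal (r ^ ((n : ℝ) + σ)) * Cc n σ := by
  haveI : Nontrivial (EuclideanSpace ℝ (Fin n)) := by
    apply Module.nontrivial_of_finrank_pos (R := ℝ)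
    rw [finrank_euclideanSpace_fin]; omega
  set V := volume (ball (0 : EuclideanSpace ℝ (Fin n)) 1) with hV
  set c := (n : ℝ) * σ⁻¹ with hcdef
  have hσ' : σ ≠ 0 := hσ0.ne
  have hc : c < -1 := exp_lt_neg_one hσn hσ0 hn
  have hc1 : c + 1 < 0 := by linarith
  have hd : 0 ≤ -(c + 1)⁻¹ := by
    have := inv_lt_zero.mpr hc1; linarith
  have hrσ : 0 < r ^ σ := Real.rpow_pos_of_pos hr σ
  have key : ∀ t ∈ Ioi (0 : ℝ),
      volume (ball (0 : EuclideanSpace ℝ (Fin n)) (min (min 1 (t ^ σ⁻¹)) r))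
        = ENNReal.ofReal ((min r (t ^ σ⁻¹)) ^ n) * V := by
    intro t ht
    have h1 : min (min 1 (t ^ σ⁻¹)) r = min r (t ^ σ⁻¹) := by
      rcases le_total (t ^ σ⁻¹) 1 with h | h
      · rw [min_eq_right h, min_comm]
      · rw [min_eq_left h, min_eq_right hr1, min_eq_left (hr1.trans h)]
    rw [h1, Measure.addHaar_ball _ _ (le_min hr.le (Real.rpow_nonneg (le_of_lt ht) σ⁻¹)),
      finrank_euclideanSpace_fin]
  rw [setLIntegral_congr_fun measurableSet_Ioi key,
    ← Ioc_union_Ioi_eq_Ioi hrσ.le, lintegral_union measurableSet_Ioi (Ioc_disjoint_Ioi le_rfl)]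
  have p1 : ∫⁻ t in Ioc (0 : ℝ) (r ^ σ), ENNReal.ofReal ((min r (t ^ σ⁻¹)) ^ n) * V
      = ENNReal.ofReal (r ^ ((n : ℝ) + σ)) * V := by
    have e : ∀ t ∈ Ioc (0 : ℝ) (r ^ σ),
        ENNReal.ofReal ((min r (t ^ σ⁻¹)) ^ n) * V = ENNReal.ofReal (r ^ n) * V := by
      intro t ht
      rw [min_eq_left ((Real.le_rpow_inv_iff_of_neg hr ht.1 hσ0).mpr ht.2)]
    rw [setLIntegral_congr_fun measurableSet_Ioc e, setLIntegral_const,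
      Real.volume_Ioc, sub_zero, mul_right_comm, ← ENNReal.ofReal_mul (by positivity),
      ← Real.rpow_natCast r n, ← Real.rpow_add hr]
  have p2 : ∫⁻ t in Ioi (r ^ σ), ENNReal.ofReal ((min r (t ^ σ⁻¹)) ^ n) * V
      = ENNReal.ofReal (r ^ ((n : ℝ) + σ) * (-(c + 1)⁻¹)) * V := by
    have e : ∀ t ∈ Ioi (r ^ σ),
        ENNReal.ofReal ((min r (t ^ σ⁻¹)) ^ n) * V = ENNReal.ofReal (t ^ c) * V := by
      intro t ht
      have ht0 : 0 < t := hrσ.trans ht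
      have h2 : t ^ σ⁻¹ ≤ r := (Real.rpow_inv_le_iff_of_neg ht0 hr hσ0).mpr (le_of_lt ht)
      rw [min_eq_right h2, ← Real.rpow_natCast (t ^ σ⁻¹) n, ← Real.rpow_mul ht0.le,
        show σ⁻¹ * (n : ℝ) = c from mul_comm _ _]
    rw [setLIntegral_congr_fun measurableSet_Ioi e,
      lintegral_mul_const _ ((measurable_id'.pow_const c).ennreal_ofReal)]
    congr 1
    have hnn : 0 ≤ᵐ[volume.restrict (Ioi (r ^ σ))] fun t : ℝ => t ^ c := by
      filter_upwards [ae_restrict_mem measurableSet_Ioi] with t ht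
      exact Real.rpow_nonneg (hrσ.trans ht).le c
    rw [← ofReal_integral_eq_lintegral_ofReal (integrableOn_Ioi_rpow_of_lt hc hrσ) hnn,
      integral_Ioi_rpow_of_lt hc hrσ]
    congr 1
    have hX : (r ^ σ) ^ (c + 1) = r ^ ((n : ℝ) + σ) := by
      rw [← Real.rpow_mul hr.le]
      congr 1
      rw [hcdef]
      field_simp
    rw [hX]
    ring
  rw [p1, p2, ← add_mul, ← ENNReal.ofReal_add (by positivity) (by positivity),
    show r ^ ((n : ℝ) + σ) + r ^ ((n : ℝ) + σ) * (-(c + 1)⁻¹)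
        = r ^ ((n : ℝ) + σ) * (1 - (c + 1)⁻¹) by ring,
    ENNReal.ofReal_mul (by positivity), Cc, mul_assoc]


lemma layer_base {σ : ℝ} (a : EuclideanSpace ℝ (Fin n)) (r : ℝ) :
    ∫⁻ x in ball a r, ENNReal.ofReal (Fc n σ x)
      = ∫⁻ t in Ioi (0 : ℝ), volume ({x | t < Fc n σ x} ∩ ball a r) := by
  rw [lintegral_eq_lintegral_meas_lt _ (ae_of_all _ (Fc_nonneg σ))
    (measurable_Fc σ).aemeasurable]
  refine setLIntegral_congr_fun measurableSet_Ioi (fun t _ => ?_)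
  rw [Measure.restrict_apply (measurableSet_lt measurable_const (measurable_Fc σ))]

lemma vol_superlevel_inter_le (hn : 1 ≤ n) {σ : ℝ} (hσ0 : σ < 0) {t : ℝ} (ht : 0 < t)
    (a : EuclideanSpace ℝ (Fin n)) {r : ℝ} :
    volume ({x | t < Fc n σ x} ∩ ball a r)
      ≤ volume (ball (0 : EuclideanSpace ℝ (Fin n)) (min (min 1 (t ^ σ⁻¹)) r)) := by
  rw [superlevel_Fc hσ0 ht]
  rcases le_total (min 1 (t ^ σ⁻¹)) r with h | h
  · rw [min_eq_left h]
    exact measure_mono ((inter_subset_left).trans diff_subset)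
  · rw [min_eq_right h, ← Measure.addHaar_ball_center volume a]
    exact measure_mono inter_subset_right

lemma vol_superlevel_inter_eq (hn : 1 ≤ n) {σ : ℝ} (hσ0 : σ < 0) {t : ℝ} (ht : 0 < t)
    {r : ℝ} :
    volume ({x | t < Fc n σ x} ∩ ball (0 : EuclideanSpace ℝ (Fin n)) r)
      = volume (ball (0 : EuclideanSpace ℝ (Fin n)) (min (min 1 (t ^ σ⁻¹)) r)) := by
  haveI : Nontrivial (EuclideanSpace ℝ (Fin n)) := by
    apply Module.nontrivial_of_finrank_pos (R := ℝ)
    rw [finrank_euclideanSpace_fin]; omega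
  rw [superlevel_Fc hσ0 ht]
  have hset : (ball (0 : EuclideanSpace ℝ (Fin n)) (min 1 (t ^ σ⁻¹)) \ {0}) ∩ ball 0 r
      = ball (0 : EuclideanSpace ℝ (Fin n)) (min (min 1 (t ^ σ⁻¹)) r) \ {0} := by
    ext x
    simp only [mem_inter_iff, mem_diff, mem_ball_zero_iff, mem_singleton_iff, lt_min_iff]
    tauto
  rw [hset, measure_diff_null (measure_singleton _)]

lemma lint_F_eq (hn : 1 ≤ n) {σ : ℝ} (hσn : -(n : ℝ) < σ) (hσ0 : σ < 0)
    {r : ℝ} (hr : 0 < r) (hr1 : r ≤ 1) :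
    ∫⁻ x in ball (0 : EuclideanSpace ℝ (Fin n)) r, ENNReal.ofReal (Fc n σ x)
      = ENNReal.ofReal (r ^ ((n : ℝ) + σ)) * Cc n σ := by
  rw [layer_base, ← Phi_eq hn hσn hσ0 hr hr1]
  refine setLIntegral_congr_fun measurableSet_Ioi (fun t ht => ?_)
  exact vol_superlevel_inter_eq hn hσ0 ht

lemma lint_F_le (hn : 1 ≤ n) {σ : ℝ} (hσn : -(n : ℝ) < σ) (hσ0 : σ < 0)
    (a : EuclideanSpace ℝ (Fin n)) {r : ℝ} (hr : 0 < r) (hr1 : r ≤ 1) :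
    ∫⁻ x in ball a r, ENNReal.ofReal (Fc n σ x)
      ≤ ENNReal.ofReal (r ^ ((n : ℝ) + σ)) * Cc n σ := by
  rw [layer_base, ← Phi_eq hn hσn hσ0 hr hr1]
  refine lintegral_mono_ae ?_
  filter_upwards [ae_restrict_mem measurableSet_Ioi] with t ht
  exact vol_superlevel_inter_le hn hσ0 ht a

lemma lint_H_le (hn : 1 ≤ n) {σ : ℝ} (hσn : -(n : ℝ) < σ) (hσ0 : σ < 0) {ε : ℝ} (hε : 0 < ε)
    (a : EuclideanSpace ℝ (Fin n)) {r : ℝ} (hr : 0 < r) (hr1 : r ≤ 1) :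
    ∫⁻ x in ball a r, ENNReal.ofReal (Hc n σ ε x)
      ≤ ENNReal.ofReal (r ^ ((n : ℝ) + σ)) * Cc n σ := by
  refine le_trans (lintegral_mono fun x => ?_) (lint_F_le hn hσn hσ0 a hr hr1)
  exact ENNReal.ofReal_le_ofReal (Hc_le_Fc hε x)

lemma lint_H_eq (hn : 1 ≤ n) {σ : ℝ} (hσn : -(n : ℝ) < σ) (hσ0 : σ < 0)
    {ε r : ℝ} (hε : 0 < ε) (hε1 : ε < 1) (hεr : ε < r) (hr1 : r ≤ 1) :
    ∫⁻ x in ball (0 : EuclideanSpace ℝ (Fin n)) r, ENNReal.ofReal (Hc n σ ε x)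
      = ENNReal.ofReal (r ^ ((n : ℝ) + σ) - ε ^ ((n : ℝ) + σ)) * Cc n σ := by
  have hr : 0 < r := hε.trans hεr
  set G : EuclideanSpace ℝ (Fin n) → ℝ :=
    fun x => if 0 < ‖x‖ ∧ ‖x‖ < ε then ‖x‖ ^ σ else 0 with hG
  have hsplit : ∀ x, ENNReal.ofReal (Fc n σ x)
      = ENNReal.ofReal (Hc n σ ε x) + ENNReal.ofReal (G x) := by
    intro x
    have hFHG : Fc n σ x = Hc n σ ε x + G x := by
      unfold Fc Hc
      rw [hG]
      rcases le_or_gt ε ‖x‖ with hx | hx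
      · have h1 : ¬ ‖x‖ < ε := not_lt.mpr hx
        have h2 : 0 < ‖x‖ := hε.trans_le hx
        by_cases h3 : ‖x‖ < 1 <;> simp [h1, h2, h3, hx]
      · have h1 : ¬ ε ≤ ‖x‖ := not_le.mpr hx
        have h3 : ‖x‖ < 1 := hx.trans hε1
        by_cases h2 : 0 < ‖x‖ <;> simp [h1, h2, h3, hx]
    rw [hFHG, ENNReal.ofReal_add (Hc_nonneg σ ε x)]
    · rw [hG]; dsimp only; split_ifs with h
      · exact Real.rpow_nonneg (norm_nonneg x) σ
      · exact le_rfl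
  have hGmeas : Measurable G := by
    apply Measurable.ite _ (measurable_norm.pow_const σ) measurable_const
    exact (measurableSet_lt measurable_const measurable_norm).inter
      (measurableSet_lt measurable_norm measurable_const)
  have hGF : ∀ x, ENNReal.ofReal (G x)
      = (ball (0 : EuclideanSpace ℝ (Fin n)) ε).indicator
          (fun x => ENNReal.ofReal (Fc n σ x)) x := by
    intro x
    by_cases hx : x ∈ ball (0 : EuclideanSpace ℝ (Fin n)) ε
    · rw [indicator_of_mem hx, hG]
      rw [mem_ball_zero_iff] at hx
      unfold Fc
      simp only
      by_cases h0 : 0 < ‖x‖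
      · rw [if_pos ⟨h0, hx⟩, if_pos ⟨h0, hx.trans hε1⟩]
      · rw [if_neg (fun hc => h0 hc.1), if_neg (fun hc => h0 hc.1)]
    · rw [indicator_of_notMem hx, hG]
      rw [mem_ball_zero_iff, not_lt] at hx
      simp only [not_lt.mpr hx, and_false, if_false, ENNReal.ofReal_zero]
  have hGint : ∫⁻ x in ball (0 : EuclideanSpace ℝ (Fin n)) r, ENNReal.ofReal (G x)
      = ENNReal.ofReal (ε ^ ((n : ℝ) + σ)) * Cc n σ := by
    calc ∫⁻ x in ball (0 : EuclideanSpace ℝ (Fin n)) r, ENNReal.ofReal (G x)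
        = ∫⁻ x in ball (0 : EuclideanSpace ℝ (Fin n)) r,
            (ball (0 : EuclideanSpace ℝ (Fin n)) ε).indicator
              (fun x => ENNReal.ofReal (Fc n σ x)) x := by
          exact lintegral_congr fun x => hGF x
      _ = ∫⁻ x in ball (0 : EuclideanSpace ℝ (Fin n)) ε, ENNReal.ofReal (Fc n σ x) := by
          rw [lintegral_indicator measurableSet_ball,
            Measure.restrict_restrict measurableSet_ball,
            inter_eq_self_of_subset_left (ball_subset_ball hεr.le)]
      _ = ENNReal.ofReal (ε ^ ((n : ℝ) + σ)) * Cc n σ := lint_F_eq hn hσn hσ0 hε hε1.le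
  have hkey : (∫⁻ x in ball (0 : EuclideanSpace ℝ (Fin n)) r, ENNReal.ofReal (Hc n σ ε x))
      + ENNReal.ofReal (ε ^ ((n : ℝ) + σ)) * Cc n σ
      = ENNReal.ofReal (r ^ ((n : ℝ) + σ)) * Cc n σ := by
    rw [← hGint, ← lintegral_add_right _ (hGmeas.ennreal_ofReal)]
    rw [← lint_F_eq hn hσn hσ0 hr hr1]
    exact lintegral_congr fun x => (hsplit x).symm
  have hfin : ENNReal.ofReal (ε ^ ((n : ℝ) + σ)) * Cc n σ ≠ ⊤ :=
    ENNReal.mul_ne_top ENNReal.ofReal_ne_top Cc_ne_top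
  have h2 : ENNReal.ofReal (r ^ ((n : ℝ) + σ) - ε ^ ((n : ℝ) + σ)) * Cc n σ
      + ENNReal.ofReal (ε ^ ((n : ℝ) + σ)) * Cc n σ
      = ENNReal.ofReal (r ^ ((n : ℝ) + σ)) * Cc n σ := by
    rw [← add_mul, ← ENNReal.ofReal_add
      (sub_nonneg.mpr (Real.rpow_le_rpow hε.le hεr.le (by linarith)))
      (Real.rpow_nonneg hε.le _), sub_add_cancel]
  exact (ENNReal.add_left_inj hfin).mp (hkey.trans h2.symm)

end

end SmallMorreyAux


open SmallMorreyAux Metric Set Filter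

/-- For `f(x) = χ_{(0,1)}(|x|) |x|^{-n/q}`, `g = χ_{(0,ε)}(|x|) f` and `h = f - g`, we have
`‖h‖_{m^p_q} ≥ ‖f‖_{m^p_q} (1 - ε^{n(1-p/q)})^{1/p}`. -/
theorem smallMorreyNorm_h_lower_bound (n : ℕ) (hn : 1 ≤ n)
    (p q ε : ℝ) (hp : 1 ≤ p) (hpq : p < q) (hε : 0 < ε) (hε1 : ε < 1)
    (f g h : EuclideanSpace ℝ (Fin n) → ℝ)
    (hf : ∀ x : EuclideanSpace ℝ (Fin n), x ≠ 0 →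
      f x = if 0 < ‖x‖ ∧ ‖x‖ < 1 then ‖x‖ ^ (-((n : ℝ) / q)) else 0)
    (hg : ∀ x : EuclideanSpace ℝ (Fin n), x ≠ 0 →
      g x = if 0 < ‖x‖ ∧ ‖x‖ < ε then f x else 0)
    (hh : h = f - g) :
    smallMorreyNorm n p q h ≥
      smallMorreyNorm n p q f * (1 - ε ^ ((n : ℝ) * (1 - p / q))) ^ (1 / p) := by
  classical
  have hp0 : 0 < p := lt_of_lt_of_le one_pos hp
  have hq : 0 < q := hp0.trans hpq
  have hn0 : 0 < (n : ℝ) := by exact_mod_cast Nat.lt_of_lt_of_le Nat.zero_lt_one hn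
  haveI : Nontrivial (EuclideanSpace ℝ (Fin n)) := by
    apply Module.nontrivial_of_finrank_pos (R := ℝ)
    rw [finrank_euclideanSpace_fin]; omega
  set σ : ℝ := -((n : ℝ) / q) * p with hσdef
  have hσ0 : σ < 0 := by
    have hnq : (0 : ℝ) < (n : ℝ) / q := by positivity
    rw [hσdef]
    exact mul_neg_of_neg_of_pos (neg_neg_iff_pos.mpr hnq) hp0
  have hσn : -(n : ℝ) < σ := by
    rw [hσdef, neg_mul, neg_lt_neg_iff, div_mul_eq_mul_div, div_lt_iff₀ hq]
    exact (mul_lt_mul_iff_right₀ hn0).mpr hpq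
  set α : ℝ := (n : ℝ) + σ with hαdef
  have hα_pos : 0 < α := by rw [hαdef]; linarith
  have hαeq : (n : ℝ) * (1 - p / q) = α := by rw [hαdef, hσdef]; ring
  have hεα1 : ε ^ α < 1 := Real.rpow_lt_one hε.le hε1 hα_pos
  have hcn : 0 ≤ (1 - ε ^ α) := by linarith
  -- pointwise identification of |f|^p and |h|^p away from the origin
  have hptf : ∀ x : EuclideanSpace ℝ (Fin n), x ≠ 0 → |f x| ^ p = Fc n σ x := by
    intro x hx0
    rw [hf x hx0]
    unfold Fc
    split_ifs with hc
    · rw [abs_of_nonneg (Real.rpow_nonneg (norm_nonneg x) _),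
        ← Real.rpow_mul (norm_nonneg x), hσdef]
    · rw [abs_zero, Real.zero_rpow hp0.ne']
  have hpth : ∀ x : EuclideanSpace ℝ (Fin n), x ≠ 0 → |h x| ^ p = Hc n σ ε x := by
    intro x hx0
    have hx : 0 < ‖x‖ := norm_pos_iff.mpr hx0
    rw [hh, Pi.sub_apply, hg x hx0]
    by_cases hxε : ‖x‖ < ε
    · rw [if_pos ⟨hx, hxε⟩, sub_self, abs_zero, Real.zero_rpow hp0.ne']
      unfold Hc
      rw [if_neg fun hc => absurd hxε (not_lt.mpr hc.1)]
    · rw [if_neg fun hc => hxε hc.2, sub_zero, hf x hx0]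
      unfold Hc
      by_cases hx1 : ‖x‖ < 1
      · rw [if_pos ⟨hx, hx1⟩, if_pos ⟨not_lt.mp hxε, hx1⟩,
          abs_of_nonneg (Real.rpow_nonneg (norm_nonneg x) _),
          ← Real.rpow_mul (norm_nonneg x), hσdef]
      · rw [if_neg fun hc => hx1 hc.2, if_neg fun hc => hx1 hc.2, abs_zero,
          Real.zero_rpow hp0.ne']
  have hfae : ∀ᵐ x ∂(volume : Measure (EuclideanSpace ℝ (Fin n))), |f x| ^ p = Fc n σ x := by
    rw [MeasureTheory.ae_iff]
    refine measure_mono_null (fun x hx => ?_) (measure_singleton 0)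
    simp only [Set.mem_setOf_eq] at hx
    simp only [Set.mem_singleton_iff]
    by_contra h0
    exact hx (hptf x h0)
  have hhae : ∀ᵐ x ∂(volume : Measure (EuclideanSpace ℝ (Fin n))), |h x| ^ p = Hc n σ ε x := by
    rw [MeasureTheory.ae_iff]
    refine measure_mono_null (fun x hx => ?_) (measure_singleton 0)
    simp only [Set.mem_setOf_eq] at hx
    simp only [Set.mem_singleton_iff]
    by_contra h0
    exact hx (hpth x h0)
  -- integral bridges
  have intf : ∀ (a : EuclideanSpace ℝ (Fin n)) (r : ℝ),
      ∫ x in Metric.ball a r, |f x| ^ p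
        = (∫⁻ x in Metric.ball a r, ENNReal.ofReal (Fc n σ x)).toReal := by
    intro a r
    rw [integral_congr_ae (ae_restrict_of_ae hfae),
      integral_eq_lintegral_of_nonneg_ae (Filter.Eventually.of_forall (Fc_nonneg σ))
        (measurable_Fc σ).aestronglyMeasurable]
  have inth : ∀ (a : EuclideanSpace ℝ (Fin n)) (r : ℝ),
      ∫ x in Metric.ball a r, |h x| ^ p
        = (∫⁻ x in Metric.ball a r, ENNReal.ofReal (Hc n σ ε x)).toReal := by
    intro a r
    rw [integral_congr_ae (ae_restrict_of_ae hhae),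
      integral_eq_lintegral_of_nonneg_ae (Filter.Eventually.of_forall (Hc_nonneg σ ε))
        (measurable_Hc σ ε).aestronglyMeasurable]
  set V : ℝ := (volume (Metric.ball (0 : EuclideanSpace ℝ (Fin n)) 1)).toReal with hVdef
  set Ct : ℝ := (Cc n σ).toReal with hCtdef
  have hV0 : 0 ≤ V := ENNReal.toReal_nonneg
  have hCt0 : 0 ≤ Ct := ENNReal.toReal_nonneg
  set δ : ℝ := 1 / q - 1 / p with hδdef
  set K : ℝ := V ^ δ * Ct ^ (1 / p) with hKdef
  have hVball : ∀ (a : EuclideanSpace ℝ (Fin n)) {r : ℝ}, 0 ≤ r →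
      (volume (Metric.ball a r)).toReal = r ^ n * V := by
    intro a r hr
    rw [Measure.addHaar_ball _ _ hr, finrank_euclideanSpace_fin, ENNReal.toReal_mul,
      ENNReal.toReal_ofReal (by positivity)]
  have hexp0 : (n : ℝ) * δ + α * (1 / p) = 0 := by
    rw [hδdef, hαdef, hσdef]
    field_simp
    ring
  -- the generic upper bound for Morrey quotients
  have hub : ∀ (a : EuclideanSpace ℝ (Fin n)) (r : ℝ), 0 < r → r < 1 → ∀ J : ℝ≥0∞,
      J ≤ ENNReal.ofReal (r ^ α) * Cc n σ →
      (volume (Metric.ball a r)).toReal ^ δ * J.toReal ^ (1 / p) ≤ K := by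
    intro a r hr hr1 J hJ
    have h1 : J.toReal ≤ r ^ α * Ct := by
      have h2 := ENNReal.toReal_mono (ENNReal.mul_ne_top ENNReal.ofReal_ne_top Cc_ne_top) hJ
      rwa [ENNReal.toReal_mul, ENNReal.toReal_ofReal (Real.rpow_nonneg hr.le α)] at h2
    rw [hVball a hr.le]
    calc (r ^ n * V) ^ δ * J.toReal ^ (1 / p)
        ≤ (r ^ n * V) ^ δ * (r ^ α * Ct) ^ (1 / p) :=
          mul_le_mul_of_nonneg_left
            (Real.rpow_le_rpow ENNReal.toReal_nonneg h1 (by positivity))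
            (Real.rpow_nonneg (by positivity) δ)
      _ = K := by
          rw [← Real.rpow_natCast r n,
            Real.mul_rpow (Real.rpow_nonneg hr.le _) hV0,
            Real.mul_rpow (Real.rpow_nonneg hr.le _) hCt0,
            ← Real.rpow_mul hr.le, ← Real.rpow_mul hr.le,
            show r ^ ((n : ℝ) * δ) * V ^ δ * (r ^ (α * (1 / p)) * Ct ^ (1 / p))
                = (V ^ δ * Ct ^ (1 / p)) * (r ^ ((n : ℝ) * δ) * r ^ (α * (1 / p))) from by ring,
            ← Real.rpow_add hr, hexp0, Real.rpow_zero, mul_one, hKdef]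
  have hbdF : ∀ v ∈ smallMorreySet n p q f, v ≤ K := by
    rintro v ⟨a, r, hr, hr1, rfl⟩
    rw [intf a r]
    exact hub a r hr hr1 _ (lint_F_le hn hσn hσ0 a hr hr1.le)
  have hbdH : ∀ v ∈ smallMorreySet n p q h, v ≤ K := by
    rintro v ⟨a, r, hr, hr1, rfl⟩
    rw [inth a r]
    exact hub a r hr hr1 _ (lint_H_le hn hσn hσ0 hε a hr hr1.le)
  have hBddH : BddAbove (smallMorreySet n p q h) := ⟨K, hbdH⟩
  have hneF : (smallMorreySet n p q f).Nonempty :=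
    ⟨_, 0, 1 / 2, by norm_num, by norm_num, rfl⟩
  have h1 : sSup (smallMorreySet n p q f) ≤ K := csSup_le hneF hbdF
  -- values of h on centered balls
  have hmem : ∀ r : ℝ, ε < r → r < 1 →
      K * ((r ^ α - ε ^ α) / r ^ α) ^ (1 / p) ∈ smallMorreySet n p q h := by
    intro r hεr hr1
    have hr : 0 < r := hε.trans hεr
    have hsub : 0 ≤ r ^ α - ε ^ α :=
      sub_nonneg.mpr (Real.rpow_le_rpow hε.le hεr.le hα_pos.le)
    have hrα : 0 < r ^ α := Real.rpow_pos_of_pos hr α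
    refine ⟨0, r, hr, hr1, ?_⟩
    rw [inth 0 r, lint_H_eq hn hσn hσ0 hε hε1 hεr hr1.le, hVball 0 hr.le,
      ENNReal.toReal_mul, ENNReal.toReal_ofReal hsub, ← hCtdef]
    have hnδ : (n : ℝ) * δ = -α * (1 / p) := by linarith [hexp0]
    rw [← Real.rpow_natCast r n,
      Real.mul_rpow (Real.rpow_nonneg hr.le _) hV0,
      Real.mul_rpow hsub hCt0,
      ← Real.rpow_mul hr.le, hnδ, Real.rpow_mul hr.le (-α) (1 / p),
      show (r ^ (-α)) ^ (1 / p) * V ^ δ * ((r ^ α - ε ^ α) ^ (1 / p) * Ct ^ (1 / p))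
          = (V ^ δ * Ct ^ (1 / p)) * ((r ^ (-α)) ^ (1 / p) * (r ^ α - ε ^ α) ^ (1 / p))
        from by ring,
      ← Real.mul_rpow (Real.rpow_nonneg hr.le _) hsub,
      Real.rpow_neg hr.le, ← hKdef]
    congr 2
    field_simp
  -- limit along r → 1⁻
  have hcl : (1 : ℝ) ∈ closure (Set.Ioo ε 1) := by
    rw [closure_Ioo hε1.ne]
    exact Set.right_mem_Icc.mpr hε1.le
  haveI hnb : (nhdsWithin (1 : ℝ) (Set.Ioo ε 1)).NeBot :=
    mem_closure_iff_nhdsWithin_neBot.mp hcl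
  have hcont : ContinuousAt (fun r : ℝ => K * ((r ^ α - ε ^ α) / r ^ α) ^ (1 / p)) 1 := by
    have h1α : ContinuousAt (fun r : ℝ => r ^ α) 1 :=
      Real.continuousAt_rpow_const 1 α (Or.inl one_ne_zero)
    have hinner : ContinuousAt (fun r : ℝ => (r ^ α - ε ^ α) / r ^ α) 1 := by
      apply ContinuousAt.div (h1α.sub continuousAt_const) h1α
      rw [Real.one_rpow]
      exact one_ne_zero
    have hmain : ContinuousAt (fun r : ℝ => ((r ^ α - ε ^ α) / r ^ α) ^ (1 / p)) 1 := by
      apply hinner.rpow_const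
      left
      show ((1 : ℝ) ^ α - ε ^ α) / (1 : ℝ) ^ α ≠ 0
      rw [Real.one_rpow, div_one]
      intro hzero
      rw [sub_eq_zero] at hzero
      linarith
    exact continuousAt_const.mul hmain
  have hlim : Filter.Tendsto (fun r : ℝ => K * ((r ^ α - ε ^ α) / r ^ α) ^ (1 / p))
      (nhdsWithin (1 : ℝ) (Set.Ioo ε 1)) (nhds (K * (1 - ε ^ α) ^ (1 / p))) := by
    have := hcont.tendsto.mono_left (nhdsWithin_le_nhds (s := Set.Ioo ε 1))
    simpa [Real.one_rpow] using this
  have h2 : K * (1 - ε ^ α) ^ (1 / p) ≤ sSup (smallMorreySet n p q h) := by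
    refine le_of_tendsto hlim ?_
    filter_upwards [self_mem_nhdsWithin] with r hr
    exact le_csSup hBddH (hmem r hr.1 hr.2)
  rw [ge_iff_le]
  calc smallMorreyNorm n p q f * (1 - ε ^ ((n : ℝ) * (1 - p / q))) ^ (1 / p)
      = sSup (smallMorreySet n p q f) * (1 - ε ^ α) ^ (1 / p) := by
        rw [smallMorreyNorm, hαeq]
    _ ≤ K * (1 - ε ^ α) ^ (1 / p) :=
        mul_le_mul_of_nonneg_right h1 (Real.rpow_nonneg hcn _)
    _ ≤ smallMorreyNorm n p q h := h2
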